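/- Full decomposition identity: D(ζ₀Z₀, B₀+Δ₀) = Z₀·D(ζ₀,B₀) + Z₀·D₁(ζ₀;Δ₀) + D₁₂(ζ₀;Z₀,Δ₀) + D₂(ζ₀,B₀;Z₀). In particular, if both (ζ₀,B₀) and (ζ₀Z₀, B₀+Δ₀) satisfy the perfect fluid equation D = 0, then Z₀·D₁(ζ₀;Δ₀) + D₁₂(ζ₀;Z₀,Δ₀) + D₂(ζ₀,B₀;Z₀) = 0. -/

import Mathlib

/-- D(ζ,B) := [r(rζ)']B' + [2r²ζ'' - 2(rζ)']B + 2ζ. -/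
noncomputable def Dop (ζ B : ℝ → ℝ) (r : ℝ) : ℝ :=
  r * deriv (fun s => s * ζ s) r * deriv B r
    + (2 * r ^ 2 * deriv (deriv ζ) r - 2 * deriv (fun s => s * ζ s) r) * B r
    + 2 * ζ r

/-- D₁(ζ;Δ) := [r(rζ)']Δ' + [2r²ζ'' - 2(rζ)']Δ. -/
noncomputable def D1 (ζ Δ : ℝ → ℝ) (r : ℝ) : ℝ :=
  r * deriv (fun s => s * ζ s) r * deriv Δ r
    + (2 * r ^ 2 * deriv (deriv ζ) r - 2 * deriv (fun s => s * ζ s) r) * Δ r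

/-- D₂(ζ,B;Z) := (r²ζB' + 4r²ζ'B - 2rζB)Z' + 2r²ζB·Z''. -/
noncomputable def D2 (ζ B Z : ℝ → ℝ) (r : ℝ) : ℝ :=
  (r ^ 2 * ζ r * deriv B r + 4 * r ^ 2 * deriv ζ r * B r - 2 * r * ζ r * B r) * deriv Z r
    + 2 * r ^ 2 * ζ r * B r * deriv (deriv Z) r

/-- D₁₂(ζ;Z,Δ) := r²ζZ'Δ' + [2r²ζZ'' + 4r²ζ'Z' - 2rζZ']Δ. -/
noncomputable def D12 (ζ Z Δ : ℝ → ℝ) (r : ℝ) : ℝ :=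
  r ^ 2 * ζ r * deriv Z r * deriv Δ r
    + (2 * r ^ 2 * ζ r * deriv (deriv Z) r + 4 * r ^ 2 * deriv ζ r * deriv Z r
        - 2 * r * ζ r * deriv Z r) * Δ r

/-! The operator D is affine in B with linear part D₁, and multiplying ζ by Z changes D(ζ,B) into
Z·D(ζ,B) + D₂(ζ,B;Z) by the Leibniz rule; since D₁ = D - 2ζ and D₁₂(ζ;Z,Δ) = D₂(ζ,Δ;Z), the same
rule gives D₁(ζZ;Δ) = Z·D₁(ζ;Δ) + D₁₂(ζ;Z,Δ). Chaining the two expansions is the decomposition. -/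

theorem deriv_deriv_mul {𝕜 : Type*} [NontriviallyNormedField 𝕜] {f g : 𝕜 → 𝕜} {x : 𝕜}
    (hf : ContDiffAt 𝕜 2 f x) (hg : ContDiffAt 𝕜 2 g x) :
    deriv (deriv fun s => f s * g s) x
      = deriv (deriv f) x * g x + 2 * deriv f x * deriv g x + f x * deriv (deriv g) x := by
  have h := iteratedDeriv_fun_mul hf hg
  norm_num [iteratedDeriv_eq_iterate, Finset.sum_range_succ] at h
  linear_combination h

theorem Dop_add {ζ B Δ : ℝ → ℝ} {r : ℝ} (hB : DifferentiableAt ℝ B r)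
    (hΔ : DifferentiableAt ℝ Δ r) :
    Dop ζ (fun s => B s + Δ s) r = Dop ζ B r + D1 ζ Δ r := by
  simp only [Dop, D1, deriv_fun_add hB hΔ]
  ring

theorem Dop_mul {ζ Z : ℝ → ℝ} (B : ℝ → ℝ) {r : ℝ} (hζ : ContDiffAt ℝ 2 ζ r)
    (hZ : ContDiffAt ℝ 2 Z r) :
    Dop (fun s => ζ s * Z s) B r = Z r * Dop ζ B r + D2 ζ B Z r := by
  have hζd := hζ.differentiableAt two_ne_zero
  have hZd := hZ.differentiableAt two_ne_zero
  have hrζZ : deriv (fun s => s * (ζ s * Z s)) r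
      = deriv (fun s => s * ζ s) r * Z r + r * ζ r * deriv Z r := by
    simp only [← mul_assoc]
    rw [deriv_fun_mul (differentiableAt_fun_id.fun_mul hζd) hZd]
  simp only [Dop, D2, hrζZ, deriv_deriv_mul hζ hZ]
  ring

theorem Dop_eq_D1_add (ζ B : ℝ → ℝ) (r : ℝ) : Dop ζ B r = D1 ζ B r + 2 * ζ r := rfl

theorem D12_eq_D2 (ζ Z Δ : ℝ → ℝ) (r : ℝ) : D12 ζ Z Δ r = D2 ζ Δ Z r := by
  simp only [D12, D2]
  ring

theorem D1_mul {ζ Z : ℝ → ℝ} (Δ : ℝ → ℝ) {r : ℝ} (hζ : ContDiffAt ℝ 2 ζ r)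
    (hZ : ContDiffAt ℝ 2 Z r) :
    D1 (fun s => ζ s * Z s) Δ r = Z r * D1 ζ Δ r + D12 ζ Z Δ r := by
  have h := Dop_mul Δ hζ hZ
  rw [Dop_eq_D1_add, Dop_eq_D1_add ζ] at h
  rw [D12_eq_D2]
  linear_combination h

theorem pf_full_decomposition_general
    (S : Set ℝ)
    (ζ₀ B₀ Z₀ Δ₀ : ℝ → ℝ)
    (hζ₀ : ∀ r ∈ S, ContDiffAt ℝ 2 ζ₀ r)
    (hZ₀ : ∀ r ∈ S, ContDiffAt ℝ 2 Z₀ r)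
    (hB₀ : ∀ r ∈ S, DifferentiableAt ℝ B₀ r)
    (hΔ₀ : ∀ r ∈ S, DifferentiableAt ℝ Δ₀ r) :
    (∀ r ∈ S,
      Dop (fun s => ζ₀ s * Z₀ s) (fun s => B₀ s + Δ₀ s) r
        = Z₀ r * Dop ζ₀ B₀ r + Z₀ r * D1 ζ₀ Δ₀ r + D12 ζ₀ Z₀ Δ₀ r + D2 ζ₀ B₀ Z₀ r) ∧
    ((∀ r ∈ S, Dop ζ₀ B₀ r = 0) →
      (∀ r ∈ S, Dop (fun s => ζ₀ s * Z₀ s) (fun s => B₀ s + Δ₀ s) r = 0) →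
      ∀ r ∈ S, Z₀ r * D1 ζ₀ Δ₀ r + D12 ζ₀ Z₀ Δ₀ r + D2 ζ₀ B₀ Z₀ r = 0) := by
  have decomposition : ∀ r ∈ S,
      Dop (fun s => ζ₀ s * Z₀ s) (fun s => B₀ s + Δ₀ s) r
        = Z₀ r * Dop ζ₀ B₀ r + Z₀ r * D1 ζ₀ Δ₀ r + D12 ζ₀ Z₀ Δ₀ r + D2 ζ₀ B₀ Z₀ r := by
    intro r hr
    rw [Dop_add (hB₀ r hr) (hΔ₀ r hr), Dop_mul B₀ (hζ₀ r hr) (hZ₀ r hr),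
      D1_mul Δ₀ (hζ₀ r hr) (hZ₀ r hr)]
    ring
  refine ⟨decomposition, fun hD hDpert r hr => ?_⟩
  linear_combination (decomposition r hr).symm + hDpert r hr - Z₀ r * hD r hr

/-- Full decomposition identity:
D(ζ₀Z₀, B₀+Δ₀) = Z₀·D(ζ₀,B₀) + Z₀·D₁(ζ₀;Δ₀) + D₁₂(ζ₀;Z₀,Δ₀) + D₂(ζ₀,B₀;Z₀);
in particular, if both (ζ₀,B₀) and (ζ₀Z₀,B₀+Δ₀) are perfect fluid spheres, then
Z₀·D₁(ζ₀;Δ₀) + D₁₂(ζ₀;Z₀,Δ₀) + D₂(ζ₀,B₀;Z₀) = 0. -/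
theorem pf_full_decomposition
    (S : Set ℝ) (hSopen : IsOpen S) (hS : ∀ r ∈ S, 0 < r)
    (ζ₀ B₀ Z₀ Δ₀ : ℝ → ℝ)
    (hζ₀ : ∀ r ∈ S, ContDiffAt ℝ 2 ζ₀ r)
    (hZ₀ : ∀ r ∈ S, ContDiffAt ℝ 2 Z₀ r)
    (hB₀ : ∀ r ∈ S, DifferentiableAt ℝ B₀ r)
    (hΔ₀ : ∀ r ∈ S, DifferentiableAt ℝ Δ₀ r) :
    (∀ r ∈ S,
      Dop (fun s => ζ₀ s * Z₀ s) (fun s => B₀ s + Δ₀ s) r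
        = Z₀ r * Dop ζ₀ B₀ r + Z₀ r * D1 ζ₀ Δ₀ r + D12 ζ₀ Z₀ Δ₀ r + D2 ζ₀ B₀ Z₀ r) ∧
    ((∀ r ∈ S, Dop ζ₀ B₀ r = 0) →
      (∀ r ∈ S, Dop (fun s => ζ₀ s * Z₀ s) (fun s => B₀ s + Δ₀ s) r = 0) →
      ∀ r ∈ S, Z₀ r * D1 ζ₀ Δ₀ r + D12 ζ₀ Z₀ Δ₀ r + D2 ζ₀ B₀ Z₀ r = 0) :=
  pf_full_decomposition_general S ζ₀ B₀ Z₀ Δ₀ hζ₀ hZ₀ hB₀ hΔ₀
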